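/- Let d ≥ 1 be an integer, α ∈ (0,2), and let u₀ : ℝ^d → [0,∞) be a bounded measurable function. Then for every ε > 0, every t ≥ ε and every x ∈ ℝ^d: ∫_{ℝ^d} g(t, x−y)·u₀(y) dy ≥ (ε^{d/α}/(2^{d+α}·κ_{d,α}))·(∫_{ℝ^d} g(ε, y)·u₀(y) dy)·g(t,x). -/

import Mathlib

open MeasureTheory Real

/-- `κ_{d,α} = Γ((d+α)/2)/(π^{d/2} Γ(α/2))`. -/
noncomputable def kappaD (d : ℕ) (α : ℝ) : ℝ :=
  Real.Gamma (((d:ℝ) + α) / 2) / (Real.pi ^ ((d:ℝ) / 2) * Real.Gamma (α / 2))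

/-- `g(t,x) = κ_{d,α} t / (t^{2/α} + |x|²)^{(d+α)/2}`. -/
noncomputable def gKer (d : ℕ) (α : ℝ) (t : ℝ) (x : EuclideanSpace ℝ (Fin d)) : ℝ :=
  kappaD d α * t / (t ^ (2/α) + ‖x‖ ^ 2) ^ (((d:ℝ) + α) / 2)

/-!
Everything rests on the Peetre-type inequality `a (b + |x - y|²) ≤ 2 (b + |x|²) (a + |y|²)` for
`0 ≤ a ≤ b`. With `a = ε^{2/α}`, `b = t^{2/α}`, raised to the power `(d+α)/2`, it gives the pointwise
bound `c g(ε,y) g(t,x) ≤ g(t,x-y)`, which is integrated against `u₀ ≥ 0`. With `a = b = t^{2/α}` it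
gives `g(t,x-y) ≤ C g(ε,y)`, so the right-hand integrand is integrable as soon as `g(ε,·) u₀` is;
if it is not, the left-hand side is `0`.
-/

theorem mul_add_norm_sub_sq_le {E : Type*} [SeminormedAddCommGroup E] {a b : ℝ}
    (ha : 0 ≤ a) (hab : a ≤ b) (x y : E) :
    a * (b + ‖x - y‖ ^ 2) ≤ 2 * (b + ‖x‖ ^ 2) * (a + ‖y‖ ^ 2) := by
  have hxy : ‖x - y‖ ^ 2 ≤ 2 * ‖x‖ ^ 2 + 2 * ‖y‖ ^ 2 := by
    nlinarith [norm_sub_le x y, norm_nonneg (x - y), sq_nonneg (‖x‖ - ‖y‖)]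
  nlinarith [mul_le_mul_of_nonneg_left hxy ha, mul_le_mul_of_nonneg_right hab (sq_nonneg ‖y‖),
    mul_nonneg (sq_nonneg ‖x‖) (sq_nonneg ‖y‖), mul_nonneg ha (ha.trans hab)]

theorem kappaD_pos (d : ℕ) {α : ℝ} (hα : 0 < α) : 0 < kappaD d α := by
  have := Real.Gamma_pos_of_pos (show 0 < ((d:ℝ) + α) / 2 by positivity)
  have := Real.Gamma_pos_of_pos (half_pos hα)
  unfold kappaD
  positivity

theorem gKer_pos (d : ℕ) {α t : ℝ} (hα : 0 < α) (ht : 0 < t) (x : EuclideanSpace ℝ (Fin d)) :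
    0 < gKer d α t x := by
  have := kappaD_pos d hα
  unfold gKer
  positivity

theorem measurable_gKer (d : ℕ) (α t : ℝ) : Measurable (gKer d α t) := by
  unfold gKer
  fun_prop

section Estimates

variable {d : ℕ} {α ε t : ℝ}

theorem gKer_mul_gKer_le_gKer_sub (hα : 0 < α) (hε : 0 < ε) (ht : ε ≤ t)
    (x y : EuclideanSpace ℝ (Fin d)) :
    ε ^ ((d:ℝ)/α) / ((2:ℝ) ^ ((d:ℝ) + α) * kappaD d α) * gKer d α ε y * gKer d α t x
      ≤ gKer d α t (x - y) := by
  have ht0 : 0 < t := hε.trans_le ht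
  set p : ℝ := ((d:ℝ) + α) / 2 with hp
  set A := t ^ (2/α) + ‖x - y‖ ^ 2
  set B := t ^ (2/α) + ‖x‖ ^ 2
  set C := ε ^ (2/α) + ‖y‖ ^ 2
  have hA : 0 < A := by positivity
  have hB : 0 < B := by positivity
  have hC : 0 < C := by positivity
  have hpeetre : ε ^ (2/α) * A ≤ 2 * B * C :=
    mul_add_norm_sub_sq_le (by positivity) (by gcongr) x y
  have hεp : (ε ^ (2/α)) ^ p = ε ^ ((d:ℝ)/α) * ε := by
    rw [← Real.rpow_mul hε.le, ← Real.rpow_add_one hε.ne']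
    rw [hp]
    field_simp
  have h2p : (2:ℝ) ^ p ≤ 2 ^ ((d:ℝ) + α) :=
    Real.rpow_le_rpow_of_exponent_le one_le_two (by linarith [hα])
  have hkey : ε ^ ((d:ℝ)/α) * ε * A ^ p ≤ 2 ^ ((d:ℝ) + α) * (B ^ p * C ^ p) :=
    calc ε ^ ((d:ℝ)/α) * ε * A ^ p = (ε ^ (2/α) * A) ^ p := by
          rw [Real.mul_rpow (by positivity) hA.le, hεp]
      _ ≤ (2 * B * C) ^ p := by gcongr
      _ = 2 ^ p * (B ^ p * C ^ p) := by
          rw [mul_assoc, Real.mul_rpow zero_le_two (by positivity), Real.mul_rpow hB.le hC.le]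
      _ ≤ 2 ^ ((d:ℝ) + α) * (B ^ p * C ^ p) := by gcongr
  have hκ := kappaD_pos d hα
  have : 0 < A ^ p := by positivity
  have : 0 < B ^ p := by positivity
  have : 0 < C ^ p := by positivity
  simp only [gKer, ← hp]
  rw [div_mul_div_comm, div_mul_div_comm, div_le_div_iff₀ (by positivity) (by positivity)]
  calc ε ^ ((d:ℝ)/α) * (kappaD d α * ε) * (kappaD d α * t) * A ^ p
      = kappaD d α ^ 2 * t * (ε ^ ((d:ℝ)/α) * ε * A ^ p) := by ring
    _ ≤ kappaD d α ^ 2 * t * (2 ^ ((d:ℝ) + α) * (B ^ p * C ^ p)) := by gcongr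
    _ = kappaD d α * t * (2 ^ ((d:ℝ) + α) * kappaD d α * C ^ p * B ^ p) := by ring

theorem exists_gKer_sub_le_mul_gKer (hα : 0 < α) (hε : 0 < ε) (ht : ε ≤ t)
    (x : EuclideanSpace ℝ (Fin d)) :
    ∃ M, ∀ y, gKer d α t (x - y) ≤ M * gKer d α ε y := by
  have ht0 : 0 < t := hε.trans_le ht
  set p : ℝ := ((d:ℝ) + α) / 2
  set b := t ^ (2/α)
  set K := 2 * (b + ‖x‖ ^ 2) / b
  have hb : 0 < b := by positivity
  refine ⟨t / ε * K ^ p, fun y => ?_⟩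
  set A := b + ‖x - y‖ ^ 2
  set C := ε ^ (2/α) + ‖y‖ ^ 2
  have hA : 0 < A := by positivity
  have hCA : C ≤ K * A := by
    have hpeetre := mul_add_norm_sub_sq_le hb.le le_rfl x (x - y)
    rw [sub_sub_cancel] at hpeetre
    calc C ≤ b + ‖y‖ ^ 2 := add_le_add_left (Real.rpow_le_rpow hε.le ht (by positivity)) _
      _ ≤ K * A := by rw [div_mul_eq_mul_div, le_div_iff₀ hb]; linarith
  have hCpow : C ^ p ≤ K ^ p * A ^ p := by
    rw [← Real.mul_rpow (by positivity) hA.le]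
    gcongr
  have hκ := kappaD_pos d hα
  show kappaD d α * t / A ^ p ≤ t / ε * K ^ p * (kappaD d α * ε / C ^ p)
  have : 0 < C ^ p := by positivity
  have : 0 < A ^ p := by positivity
  rw [div_le_iff₀ (by positivity)]
  calc kappaD d α * t = kappaD d α * t / C ^ p * C ^ p := by field_simp
    _ ≤ kappaD d α * t / C ^ p * (K ^ p * A ^ p) := by gcongr
    _ = t / ε * K ^ p * (kappaD d α * ε / C ^ p) * A ^ p := by field_simp

theorem integrable_gKer_sub_mul {u : EuclideanSpace ℝ (Fin d) → ℝ} (hα : 0 < α) (hε : 0 < ε)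
    (ht : ε ≤ t) (hmeas : Measurable u) (hnn : ∀ y, 0 ≤ u y)
    (hint : Integrable (fun y => gKer d α ε y * u y)) (x : EuclideanSpace ℝ (Fin d)) :
    Integrable (fun y => gKer d α t (x - y) * u y) := by
  obtain ⟨M, hM⟩ := exists_gKer_sub_le_mul_gKer hα hε ht x
  refine (hint.const_mul M).mono' ?_ (ae_of_all _ fun y => ?_)
  · exact (((measurable_gKer d α t).comp (measurable_const.sub measurable_id)).mul
      hmeas).aestronglyMeasurable
  · rw [Real.norm_of_nonneg (mul_nonneg (gKer_pos d hα (hε.trans_le ht) _).le (hnn y)), ← mul_assoc]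
    exact mul_le_mul_of_nonneg_right (hM y) (hnn y)

end Estimates

theorem g_convolution_initial_data_lower_bound_general
    (d : ℕ) (α : ℝ) (hα : α ∈ Set.Ioo (0:ℝ) 2)
    (u₀ : EuclideanSpace ℝ (Fin d) → ℝ) (hmeas : Measurable u₀)
    (hnn : ∀ y, 0 ≤ u₀ y)
    (ε : ℝ) (hε : 0 < ε) (t : ℝ) (ht : ε ≤ t) (x : EuclideanSpace ℝ (Fin d)) :
    (ε ^ ((d:ℝ)/α) / ((2:ℝ) ^ ((d:ℝ) + α) * kappaD d α)) *
        (∫ y : EuclideanSpace ℝ (Fin d), gKer d α ε y * u₀ y) * gKer d α t x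
      ≤ ∫ y : EuclideanSpace ℝ (Fin d), gKer d α t (x - y) * u₀ y := by
  have hα0 := hα.1
  have hgt := gKer_pos d hα0 (hε.trans_le ht)
  by_cases hint : Integrable (fun y => gKer d α ε y * u₀ y)
  · rw [← integral_const_mul, ← integral_mul_const]
    refine integral_mono_of_nonneg (ae_of_all _ fun y => ?_)
      (integrable_gKer_sub_mul hα0 hε ht hmeas hnn hint x) (ae_of_all _ fun y => ?_)
    · have := kappaD_pos d hα0
      have := gKer_pos d hα0 hε y
      have := hgt x
      have := hnn y
      positivity
    · simpa only [mul_assoc, mul_comm (u₀ y), mul_left_comm (u₀ y)] using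
        mul_le_mul_of_nonneg_right (gKer_mul_gKer_le_gKer_sub hα0 hε ht x y) (hnn y)
  · rw [integral_undef hint, mul_zero, zero_mul]
    exact integral_nonneg fun y => mul_nonneg (hgt _).le (hnn y)

/-- lower bound of `∫ g(t, x−y) u₀(y) dy` in terms of `g(t,x)`
for `t ≥ ε`, for nonnegative bounded measurable `u₀`. -/
theorem g_convolution_initial_data_lower_bound
    (d : ℕ) (hd : 1 ≤ d) (α : ℝ) (hα : α ∈ Set.Ioo (0:ℝ) 2)
    (u₀ : EuclideanSpace ℝ (Fin d) → ℝ) (hmeas : Measurable u₀)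
    (hnn : ∀ y, 0 ≤ u₀ y) (hbdd : ∃ M : ℝ, ∀ y, u₀ y ≤ M)
    (ε : ℝ) (hε : 0 < ε) (t : ℝ) (ht : ε ≤ t) (x : EuclideanSpace ℝ (Fin d)) :
    (ε ^ ((d:ℝ)/α) / ((2:ℝ) ^ ((d:ℝ) + α) * kappaD d α)) *
        (∫ y : EuclideanSpace ℝ (Fin d), gKer d α ε y * u₀ y) * gKer d α t x
      ≤ ∫ y : EuclideanSpace ℝ (Fin d), gKer d α t (x - y) * u₀ y :=
  g_convolution_initial_data_lower_bound_general d α hα u₀ hmeas hnn ε hε t ht x
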